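/- The Pell-type equation 25v² − 6u² = 1 has infinitely many solutions in positive integers (u, v). -/
import Mathlib

/-- Sequence of solutions to `25v² − 6u² = 1`. -/
def pellSeq : ℕ → ℤ × ℤ
  | 0 => (2, 1)
  | n + 1 =>
    let p := pellSeq n
    (49 * p.1 + 100 * p.2, 24 * p.1 + 49 * p.2)

lemma pellSeq_prop (n : ℕ) :
    0 < (pellSeq n).1 ∧ 0 < (pellSeq n).2 ∧
      25 * (pellSeq n).2 ^ 2 - 6 * (pellSeq n).1 ^ 2 = 1 := by
  induction n with
  | zero => norm_num [pellSeq]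
  | succ n ih =>
    obtain ⟨h1, h2, h3⟩ := ih
    refine ⟨by simp [pellSeq]; nlinarith, by simp [pellSeq]; nlinarith, ?_⟩
    simp only [pellSeq]
    ring_nf
    ring_nf at h3
    linarith

lemma pellSeq_mono (n : ℕ) : (pellSeq n).1 < (pellSeq (n + 1)).1 := by
  obtain ⟨h1, h2, -⟩ := pellSeq_prop n
  simp [pellSeq]
  nlinarith

lemma pellSeq_strictMono : StrictMono (fun n => (pellSeq n).1) :=
  strictMono_nat_of_lt_succ pellSeq_mono

/-- The Pell-type equation `25v² − 6u² = 1` has infinitely many solutions in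
positive integers `(u, v)`. -/
theorem stmt_7 :
    {p : ℤ × ℤ | 0 < p.1 ∧ 0 < p.2 ∧ 25 * p.2 ^ 2 - 6 * p.1 ^ 2 = 1}.Infinite := by
  apply Set.infinite_of_injective_forall_mem (f := pellSeq)
  case hi =>
    intro a b hab
    have := congrArg Prod.fst hab
    exact pellSeq_strictMono.injective this
  case hf =>
    intro n
    exact pellSeq_prop n
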